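/- arXiv:1602.01143 — 3 statements merged into one kernel-verified Lean document; each statement's English description precedes it below -/
import Mathlib

section
/- Let f, g ∈ ℂ[[x,y]] be irreducible power series coprime with x. Then for every Newton–Puiseux root γ of g, cont(f,γ) = cont(f,g); i.e., the quantity max{O(α,γ) : α ∈ Zer f} does not depend on the choice of γ ∈ Zer g. -/
/-!
STATEMENT 9. Newton–Puiseux roots of an irreducible power series
`f ∈ ℂ[[x,y]]` coprime with `x`, viewed inside `ℂ[[x^{1/m}]]`, form one
orbit of the star action of the group `U_m` of `m`-th roots of unity
(Puiseux theorem); this orbit structure is how `Zer f` is modelled below.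
Contact orders take values in `ℚ ∪ {∞}` (`WithTop ℚ`): `contEqT φ ψ r`
says `O(φ,ψ) = r`, and `cont(f,γ)` (resp. `cont(f,g)`) is the greatest
contact of `γ` (resp. of roots of `g`) with roots of `f`.
-/

abbrev PSer : Type := ℚ → ℂ

def contGe (φ ψ : PSer) (r : ℚ) : Prop := ∀ q : ℚ, q < r → φ q = ψ q

def contEq (φ ψ : PSer) (r : ℚ) : Prop := contGe φ ψ r ∧ φ r ≠ ψ r

/-- `O(φ,ψ) = r` for `r ∈ ℚ ∪ {∞}`. -/
def contEqT (φ ψ : PSer) (r : WithTop ℚ) : Prop :=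
  match r with
  | none => φ = ψ
  | some q => contEq φ ψ q

def hasDen (m : ℕ) (φ : PSer) : Prop := ∀ q : ℚ, φ q ≠ 0 → ∃ i : ℕ, q = (i : ℚ) / m

def posOrder (φ : PSer) : Prop := ∀ q : ℚ, q ≤ 0 → φ q = 0

noncomputable def star (m : ℕ) (ε : ℂ) (φ : PSer) : PSer :=
  fun q => ε ^ (q * m).num.toNat * φ q

/-- The orbit of `α` under the star action of `U_m`: the set of
Newton–Puiseux roots of an irreducible series having `α` as a root. -/
def orbit (m : ℕ) (α : PSer) : Set PSer :=
  {γ | ∃ ε : ℂ, ε ^ m = 1 ∧ γ = star m ε α}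

/-- `cont(f,γ) = r`, where `Zf = Zer f`. -/
def contRootEq (Zf : Set PSer) (γ : PSer) (r : WithTop ℚ) : Prop :=
  IsGreatest {r' : WithTop ℚ | ∃ α ∈ Zf, contEqT α γ r'} r

/-- `cont(f,g) = r`, where `Zf = Zer f` and `Zg = Zer g`. -/
def contSetEq (Zf Zg : Set PSer) (r : WithTop ℚ) : Prop :=
  IsGreatest {r' : WithTop ℚ | ∃ α ∈ Zf, ∃ γ ∈ Zg, contEqT α γ r'} r

lemma pser_star_star (m : ℕ) (δ ε : ℂ) (φ : PSer) :
    star m δ (star m ε φ) = star m (δ * ε) φ := by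
  funext q
  show δ ^ _ * (ε ^ _ * φ q) = (δ * ε) ^ _ * φ q
  rw [mul_pow]; ring

lemma contEqT_star (m : ℕ) (δ : ℂ) (hδ : δ ≠ 0) (a c : PSer) (r : WithTop ℚ)
    (h : contEqT a c r) : contEqT (star m δ a) (star m δ c) r := by
  cases r with
  | top => simp only [contEqT] at h ⊢; rw [h]
  | coe q =>
    obtain ⟨h1, h2⟩ := h
    refine ⟨fun q' hq' => by show δ ^ _ * a q' = δ ^ _ * c q'; rw [h1 q' hq'], ?_⟩
    show δ ^ _ * a q ≠ δ ^ _ * c q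
    intro hcon
    exact h2 (mul_left_cancel₀ (pow_ne_zero _ hδ) hcon)

/-- For every Newton–Puiseux root `γ` of `g`, `cont(f,γ) = cont(f,g)`. -/
theorem stmt9 (m : ℕ) (hm : 0 < m) (α β : PSer)
    (hα : hasDen m α) (hβ : hasDen m β) (hαpos : posOrder α) (hβpos : posOrder β)
    (Zf Zg : Set PSer) (hZf : Zf = orbit m α) (hZg : Zg = orbit m β)
    (γ : PSer) (hγ : γ ∈ Zg) (r : WithTop ℚ) :
    contRootEq Zf γ r ↔ contSetEq Zf Zg r := by
  have key : {r' : WithTop ℚ | ∃ a ∈ Zf, contEqT a γ r'}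
      = {r' : WithTop ℚ | ∃ a ∈ Zf, ∃ c ∈ Zg, contEqT a c r'} := by
    ext r'
    constructor
    · rintro ⟨a, ha, h⟩
      exact ⟨a, ha, γ, hγ, h⟩
    · rintro ⟨a, ha, c, hc, h⟩
      rw [hZg] at hγ hc
      obtain ⟨ε₁, hε₁, rfl⟩ := hγ
      obtain ⟨ε₂, hε₂, rfl⟩ := hc
      have hε₂0 : ε₂ ≠ 0 := fun h0 => by
        rw [h0, zero_pow hm.ne'] at hε₂; exact one_ne_zero hε₂.symm
      set δ := ε₁ / ε₂ with hδdef
      have hδ0 : δ ≠ 0 := div_ne_zero (fun h0 => by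
        rw [h0, zero_pow hm.ne'] at hε₁; exact one_ne_zero hε₁.symm) hε₂0
      have hδm : δ ^ m = 1 := by
        rw [hδdef, div_pow, hε₁, hε₂, div_one]
      have hγeq : star m δ (star m ε₂ β) = star m ε₁ β := by
        rw [pser_star_star, div_mul_cancel₀ _ hε₂0]
      rw [hZf] at ha ⊢
      obtain ⟨εa, hεa, rfl⟩ := ha
      refine ⟨star m (δ * εa) α, ⟨δ * εa, by rw [mul_pow, hδm, hεa, one_mul], rfl⟩, ?_⟩
      rw [← pser_star_star, ← hγeq]
      exact contEqT_star m δ hδ0 _ _ _ h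
  unfold contRootEq contSetEq
  rw [key]
end

section
/- Let f, g ∈ ℂ[[x,y]] be irreducible power series coprime with x. For every rational number q < cont(f,g): q is a characteristic exponent of f if and only if q is a characteristic exponent of g. -/
/-- `q` is a characteristic exponent of the branch with root set `Z`. -/
def isCharExp (Z : Set PSer) (q : ℚ) : Prop :=
  ∃ α ∈ Z, ∃ β ∈ Z, α ≠ β ∧ contEq α β q

/-! ### Auxiliary lemmas -/

lemma contEq_symm {φ ψ : PSer} {q : ℚ} (h : contEq φ ψ q) : contEq ψ φ q :=
  ⟨fun q' hq' => (h.1 q' hq').symm, fun h' => h.2 h'.symm⟩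

lemma contEqT_symm {φ ψ : PSer} {r : WithTop ℚ} (h : contEqT φ ψ r) : contEqT ψ φ r := by
  cases r with
  | top => exact (show φ = ψ from h).symm
  | coe q => exact contEq_symm (show contEq φ ψ q from h)

/-- Strong triangle inequality (the unequal case): if `O(φ,ψ) = q < r = O(ψ,χ)`
then `O(φ,χ) = q`. -/
lemma contEq_chain {φ ψ χ : PSer} {q : ℚ} {r : WithTop ℚ}
    (h1 : contEq φ ψ q) (h2 : contEqT ψ χ r) (hqr : (q : WithTop ℚ) < r) :
    contEq φ χ q := by
  cases r with
  | top =>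
    have h2' : ψ = χ := h2
    exact ⟨fun q' hq' => (h1.1 q' hq').trans (congrFun h2' q'),
      fun h' => h1.2 (h'.trans (congrFun h2' q).symm)⟩
  | coe r0 =>
    have h2' : contEq ψ χ r0 := h2
    have hqr0 : q < r0 := by exact_mod_cast hqr
    refine ⟨fun q' hq' => (h1.1 q' hq').trans (h2'.1 q' (hq'.trans hqr0)), ?_⟩
    intro h'
    exact h1.2 (h'.trans (h2'.1 q hqr0).symm)

lemma star_comp (m : ℕ) (ε ε' : ℂ) (φ : PSer) :
    star m ε (star m ε' φ) = star m (ε * ε') φ := by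
  funext q
  simp [_root_.star, mul_pow, mul_assoc]

lemma contEqT_star_s10 {φ ψ : PSer} {r : WithTop ℚ} (m : ℕ) {ε : ℂ} (hε : ε ≠ 0)
    (h : contEqT φ ψ r) : contEqT (star m ε φ) (star m ε ψ) r := by
  cases r with
  | top => exact congrArg (star m ε) h
  | coe q =>
    refine ⟨fun q' hq' => by simp [_root_.star, h.1 q' hq'], fun h' => ?_⟩
    exact h.2 (mul_left_cancel₀ (pow_ne_zero _ hε) h')

lemma root_ne_zero {m : ℕ} (hm : 0 < m) {ε : ℂ} (hε : ε ^ m = 1) : ε ≠ 0 := by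
  intro h0
  rw [h0, zero_pow hm.ne'] at hε
  exact zero_ne_one hε

/-- Key step: if some root of `Zf` has contact `r` with some root of `Zg`, then every
characteristic exponent `q < r` of `Zf` is a characteristic exponent of `Zg`. -/
lemma char_transfer {m : ℕ} (hm : 0 < m) {α β : PSer} {Zf Zg : Set PSer}
    (hZf : Zf = orbit m α) (hZg : Zg = orbit m β)
    {α₀ γ₀ : PSer} (hα₀ : α₀ ∈ Zf) (hγ₀ : γ₀ ∈ Zg) {r : WithTop ℚ}
    (hc : contEqT α₀ γ₀ r) {q : ℚ} (hq : (q : WithTop ℚ) < r)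
    (h : isCharExp Zf q) : isCharExp Zg q := by
  obtain ⟨α₁, h1, α₂, h2, _, h12⟩ := h
  subst hZf hZg
  obtain ⟨ε₀, hε₀, hα₀eq⟩ := hα₀
  obtain ⟨εg, hεg, hγ₀eq⟩ := hγ₀
  have hε₀ne : ε₀ ≠ 0 := root_ne_zero hm hε₀
  -- a root of the orbit of α can be written as star of α₀
  have key : ∀ φ : PSer, φ ∈ orbit m α →
      ∃ δ : ℂ, δ ^ m = 1 ∧ φ = star m δ α₀ := by
    rintro φ ⟨ε, hε, rfl⟩
    refine ⟨ε * ε₀⁻¹, by rw [mul_pow, hε, inv_pow, hε₀]; simp, ?_⟩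
    rw [hα₀eq, star_comp]
    field_simp
  obtain ⟨δ₁, hδ₁, hα₁⟩ := key α₁ h1
  obtain ⟨δ₂, hδ₂, hα₂⟩ := key α₂ h2
  set γ₁ := star m δ₁ γ₀ with hγ₁
  set γ₂ := star m δ₂ γ₀ with hγ₂
  have hγ₁mem : γ₁ ∈ orbit m β :=
    ⟨δ₁ * εg, by rw [mul_pow, hδ₁, hεg, one_mul], by rw [hγ₁, hγ₀eq, star_comp]⟩
  have hγ₂mem : γ₂ ∈ orbit m β :=
    ⟨δ₂ * εg, by rw [mul_pow, hδ₂, hεg, one_mul], by rw [hγ₂, hγ₀eq, star_comp]⟩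
  have hc₁ : contEqT α₁ γ₁ r := by
    rw [hα₁, hγ₁]; exact contEqT_star_s10 m (root_ne_zero hm hδ₁) hc
  have hc₂ : contEqT α₂ γ₂ r := by
    rw [hα₂, hγ₂]; exact contEqT_star_s10 m (root_ne_zero hm hδ₂) hc
  -- O(γ₁, α₂) = q, then O(γ₁, γ₂) = q
  have hA : contEq γ₁ α₂ q := contEq_symm (contEq_chain (contEq_symm h12) hc₁ hq)
  have hB : contEq γ₁ γ₂ q := contEq_chain hA hc₂ hq
  exact ⟨γ₁, hγ₁mem, γ₂, hγ₂mem, fun he => hB.2 (congrFun he q), hB⟩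

theorem stmt10 (m : ℕ) (hm : 0 < m) (α β : PSer)
    (hα : hasDen m α) (hβ : hasDen m β) (hαpos : posOrder α) (hβpos : posOrder β)
    (Zf Zg : Set PSer) (hZf : Zf = orbit m α) (hZg : Zg = orbit m β)
    (r : WithTop ℚ) (hr : contSetEq Zf Zg r)
    (q : ℚ) (hq : (q : WithTop ℚ) < r) :
    isCharExp Zf q ↔ isCharExp Zg q := by
  obtain ⟨α₀, hα₀, γ₀, hγ₀, hc⟩ := hr.1
  exact ⟨char_transfer hm hZf hZg hα₀ hγ₀ hc hq,
         char_transfer hm hZg hZf hγ₀ hα₀ (contEqT_symm hc) hq⟩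
end

section
/- Let f, g ∈ ℂ[[x,y]] be irreducible power series coprime with x, and suppose q = cont(f,g) is a characteristic exponent of f. If there exists a Newton–Puiseux root γ of g whose support contains q (i.e., the coefficient of x^q in γ is nonzero), then q is a characteristic exponent of g. -/
theorem stmt11 (m : ℕ) (hm : 0 < m) (α β : PSer)
    (hα : hasDen m α) (hβ : hasDen m β) (hαpos : posOrder α) (hβpos : posOrder β)
    (Zf Zg : Set PSer) (hZf : Zf = orbit m α) (hZg : Zg = orbit m β)
    (q : ℚ) (hq : contSetEq Zf Zg (q : WithTop ℚ))
    (hqchar : isCharExp Zf q)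
    (γ : PSer) (hγ : γ ∈ Zg) (hsupp : γ q ≠ 0) :
    isCharExp Zg q := by
  subst hZf hZg
  have hne0 : ∀ ε : ℂ, ε ^ m = 1 → ε ≠ 0 := by
    intro ε hε h
    rw [h, zero_pow hm.ne'] at hε
    exact zero_ne_one hε
  obtain ⟨⟨α', hα', γ'', hγ'', hcT⟩, -⟩ := hq
  obtain ⟨α₁, hα₁, α₂, hα₂, hne12, hc12⟩ := hqchar
  obtain ⟨ε₁, hε₁, rfl⟩ := hα₁
  obtain ⟨ε₂, hε₂, rfl⟩ := hα₂
  obtain ⟨η, hη, rfl⟩ := hα'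
  obtain ⟨δ₂, hδ₂, rfl⟩ := hγ''
  obtain ⟨δ₁, hδ₁, rfl⟩ := hγ
  have hcT' : contEq (star m η α) (star m δ₂ β) q := hcT
  set ε : ℂ := ε₂ / ε₁ with hεdef
  have hεm : ε ^ m = 1 := by
    rw [hεdef, div_pow, hε₁, hε₂, div_one]
  have key1 : ∀ r : ℚ, r < q → α r ≠ 0 → ε ^ (r * m).num.toNat = 1 := by
    intro r hr har
    have h : ε₁ ^ (r * m).num.toNat * α r = ε₂ ^ (r * m).num.toNat * α r :=
      hc12.1 r hr
    have h' : ε₁ ^ (r * m).num.toNat = ε₂ ^ (r * m).num.toNat :=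
      mul_right_cancel₀ har h
    rw [hεdef, div_pow, ← h', div_self (pow_ne_zero _ (hne0 ε₁ hε₁))]
  have key2 : ε ^ (q * m).num.toNat ≠ 1 := by
    intro h
    apply hc12.2
    have h' : ε₂ ^ (q * m).num.toNat = ε₁ ^ (q * m).num.toNat := by
      rw [hεdef, div_pow, div_eq_one_iff_eq (pow_ne_zero _ (hne0 ε₁ hε₁))] at h
      exact h
    show ε₁ ^ (q * m).num.toNat * α q = ε₂ ^ (q * m).num.toNat * α q
    rw [h']
  have hβq : β q ≠ 0 := by
    intro h0
    apply hsupp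
    show δ₁ ^ (q * m).num.toNat * β q = 0
    rw [h0, mul_zero]
  have hdiff : star m δ₁ β q ≠ star m (ε * δ₁) β q := by
    intro h
    have h2 : δ₁ ^ (q * m).num.toNat * β q
        = (ε * δ₁) ^ (q * m).num.toNat * β q := h
    rw [mul_pow] at h2
    have h3 := mul_right_cancel₀ hβq h2
    apply key2
    exact mul_right_cancel₀ (pow_ne_zero _ (hne0 δ₁ hδ₁))
      (by rw [one_mul]; exact h3.symm)
  refine ⟨star m δ₁ β, ⟨δ₁, hδ₁, rfl⟩, star m (ε * δ₁) β,
    ⟨ε * δ₁, by rw [mul_pow, hεm, hδ₁, one_mul], rfl⟩,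
    fun h => hdiff (congrFun h q), ?_, hdiff⟩
  intro r hr
  show δ₁ ^ (r * m).num.toNat * β r = (ε * δ₁) ^ (r * m).num.toNat * β r
  by_cases hβr : β r = 0
  · rw [hβr, mul_zero, mul_zero]
  · have har : α r ≠ 0 := by
      intro h0
      have h2 : η ^ (r * m).num.toNat * α r = δ₂ ^ (r * m).num.toNat * β r :=
        hcT'.1 r hr
      rw [h0, mul_zero] at h2
      rcases mul_eq_zero.mp h2.symm with h1 | h1
      · exact absurd h1 (pow_ne_zero _ (hne0 δ₂ hδ₂))
      · exact hβr h1
    rw [mul_pow, key1 r hr har, one_mul]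
end
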